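/- For every T > 0 and every s < d_S/4, the Strichartz estimate ‖S_t ψ‖_{L⁴_t L⁴_x([0,T]×SG)} ≤ C(T) ‖ψ‖_{H^s(SG)} fails: there exists a sequence of localized eigenfunctions ψ^{(j)} with ‖S_tψ^{(j)}‖_{L⁴_tL⁴_x}⁴ = T‖ψ^{(j)}‖_{L⁴}⁴ ≳ T λ_{ψ^{(j)}}^{d_S/4·2·2} while ‖ψ^{(j)}‖_{H^s}² ≃ λ_{ψ^{(j)}}^{s}, and λ_{ψ^{(j)}} → ∞, so the ratio ‖S_tψ^{(j)}‖_{L⁴L⁴}/‖ψ^{(j)}‖_{H^s} → ∞. -/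

import Mathlib

open MeasureTheory Filter

/-!
The Schrödinger flow only rotates the phase of an eigenfunction, so `|S_t ψ| = |ψ|` pointwise and
`‖S_t ψ‖⁴_{L⁴_t L⁴_x} = T ‖ψ‖⁴_{L⁴}`. Saturation of the Sobolev embedding makes the `L⁴L⁴` norm of
`S_t ψ^{(j)}` at least of order `λ_j^{d_S/8}`, while `‖ψ^{(j)}‖_{H^s}` is at most of order
`λ_j^{s/2}`; for `s < d_S/4` the ratio grows like a positive power of `λ_j = c·5^j → ∞`.
-/

theorem norm_exp_neg_I_mul_mul (t a : ℝ) : ‖Complex.exp (-(Complex.I * t * a))‖ = 1 := by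
  simp [Complex.norm_exp]

theorem intervalIntegral_integral_norm_pow_of_phase {X : Type*} [MeasurableSpace X]
    (μ : Measure X) (S : ℝ → (X → ℂ) → (X → ℂ)) (f : X → ℂ) (a : ℝ)
    (hS : ∀ t : ℝ, S t f = fun x => Complex.exp (-(Complex.I * t * a)) * f x) (n : ℕ) (T : ℝ) :
    ∫ t in (0:ℝ)..T, ∫ x, ‖S t f x‖ ^ n ∂μ = T * ∫ x, ‖f x‖ ^ n ∂μ := by
  simp only [hS, norm_mul, norm_exp_neg_I_mul_mul, one_mul, intervalIntegral.integral_const,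
    sub_zero, smul_eq_mul]

theorem mul_rpow_mul_rpow_le {a l b e r T : ℝ} (hT : 0 ≤ T) (ha : 0 ≤ a) (hl : 0 ≤ l)
    (hr : 0 ≤ r) (h : a * l ^ e ≤ b) : (T * a) ^ r * l ^ (e * r) ≤ (T * b) ^ r := by
  rw [Real.rpow_mul hl, ← Real.mul_rpow (by positivity) (by positivity), mul_assoc]
  exact Real.rpow_le_rpow (by positivity) (mul_le_mul_of_nonneg_left h hT) hr

theorem tendsto_div_atTop_of_le_rpow {ι : Type*} {l : Filter ι} {f g lam : ι → ℝ}
    {a b p q : ℝ} (ha : 0 < a) (hb : 0 < b) (hqp : q < p) (hlam : Tendsto lam l atTop)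
    (hf : ∀ i, a * lam i ^ p ≤ f i) (hg_pos : ∀ i, 0 < g i) (hg : ∀ i, g i ≤ b * lam i ^ q) :
    Tendsto (fun i => f i / g i) l atTop := by
  have hpow : Tendsto (fun i => a / b * lam i ^ (p - q)) l atTop :=
    ((tendsto_rpow_atTop (sub_pos.2 hqp)).comp hlam).const_mul_atTop (div_pos ha hb)
  refine tendsto_atTop_mono' l ?_ hpow
  filter_upwards [hlam.eventually_gt_atTop 0] with i hi
  calc a / b * lam i ^ (p - q) = a * lam i ^ p / (b * lam i ^ q) := by
        rw [Real.rpow_sub hi]; field_simp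
    _ ≤ f i / g i := div_le_div₀ ((mul_nonneg ha.le (Real.rpow_nonneg hi.le p)).trans (hf i)) (hf i) (hg_pos i) (hg i)

theorem stmt_16_general {X : Type*} [MeasurableSpace X] (μ : Measure X)
    (dS : ℝ)
    (S : ℝ → (X → ℂ) → (X → ℂ)) (ψ : ℕ → X → ℝ) (lam : ℕ → ℝ)
    (HsNorm : ℝ → (X → ℝ) → ℝ)
    (c c' c1 c2 : ℝ) (hc : 0 < c) (hc' : 0 < c') (hc1 : 0 < c1) (hc2 : 0 < c2)
    (hlam : ∀ j, lam j = c * 5 ^ j)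
    (heig : ∀ (j : ℕ) (t : ℝ), S t (fun y => (ψ j y : ℂ)) =
      fun x => Complex.exp (-(Complex.I * t * lam j)) * (ψ j x : ℂ))
    (hL4 : ∀ j, c' * lam j ^ (dS / 2) ≤ ∫ x, (ψ j x) ^ 4 ∂μ)
    (hHs : ∀ (s : ℝ) (j : ℕ),
      c1 * lam j ^ (s / 2) ≤ HsNorm s (ψ j) ∧ HsNorm s (ψ j) ≤ c2 * lam j ^ (s / 2)) :
    ∀ T : ℝ, 0 < T → ∀ s : ℝ, s < dS / 4 →
      (∀ j : ℕ,
        ((∫ t in (0:ℝ)..T, ∫ x,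
            (‖S t (fun y => (ψ j y : ℂ)) x‖) ^ 4 ∂μ) ^ ((1:ℝ)/4)) ^ 4 =
          T * ∫ x, (ψ j x) ^ 4 ∂μ) ∧
      (∀ C : ℝ, ∃ j : ℕ, C * HsNorm s (ψ j) <
        (∫ t in (0:ℝ)..T, ∫ x,
            (‖S t (fun y => (ψ j y : ℂ)) x‖) ^ 4 ∂μ) ^ ((1:ℝ)/4)) ∧
      Tendsto (fun j : ℕ =>
        ((∫ t in (0:ℝ)..T, ∫ x,
            (‖S t (fun y => (ψ j y : ℂ)) x‖) ^ 4 ∂μ) ^ ((1:ℝ)/4)) /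
          HsNorm s (ψ j)) atTop atTop := by
  intro T hT s hs
  have hlam_pos : ∀ j, 0 < lam j := fun j => by rw [hlam]; positivity
  have hLL : ∀ j, ∫ t in (0:ℝ)..T, ∫ x, ‖S t (fun y => (ψ j y : ℂ)) x‖ ^ 4 ∂μ =
      T * ∫ x, (ψ j x) ^ 4 ∂μ := fun j => by
    simp only [intervalIntegral_integral_norm_pow_of_phase μ S _ _ (heig j), Complex.norm_real,
      Real.norm_eq_abs, Even.pow_abs (by decide : Even 4)]
  have hHs_pos : ∀ j, 0 < HsNorm s (ψ j) := fun j =>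
    (mul_pos hc1 (Real.rpow_pos_of_pos (hlam_pos j) _)).trans_le (hHs s j).1
  have hlam_tendsto : Tendsto lam atTop atTop := by
    rw [funext hlam]
    exact (tendsto_pow_atTop_atTop_of_one_lt (by norm_num : (1:ℝ) < 5)).const_mul_atTop hc
  have hratio : Tendsto (fun j => (T * ∫ x, (ψ j x) ^ 4 ∂μ) ^ ((1:ℝ)/4) / HsNorm s (ψ j))
      atTop atTop :=
    tendsto_div_atTop_of_le_rpow (by positivity) hc2 (by linarith) hlam_tendsto
      (fun j => mul_rpow_mul_rpow_le hT.le hc'.le (hlam_pos j).le (by norm_num) (hL4 j))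
      hHs_pos (fun j => (hHs s j).2)
  simp only [hLL]
  refine ⟨fun j => ?_, fun C => ?_, hratio⟩
  · rw [show (1:ℝ)/4 = ((4:ℕ):ℝ)⁻¹ by norm_num, Real.rpow_inv_natCast_pow _ four_ne_zero]
    exact mul_nonneg hT.le (integral_nonneg fun x => by positivity)
  · obtain ⟨j, hj⟩ := (hratio.eventually_gt_atTop C).exists
    exact ⟨j, (lt_div_iff₀ (hHs_pos j)).mp hj⟩

/-- Failure of the Strichartz estimate below `d_S/4` on the Sierpinski gasket: for a family of
localized `L²`-normalized eigenfunctions `ψ^{(j)}` with eigenvalues `λ_j = c·5^j`, saturating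
the Sobolev embedding (`‖ψ^{(j)}‖_{L⁴}⁴ ≳ λ_j^{d_S/2}`) and with `‖ψ^{(j)}‖_{H^s} ≃ λ_j^{s/2}`,
one has `‖S_tψ^{(j)}‖⁴_{L⁴_tL⁴_x([0,T]×X)} = T‖ψ^{(j)}‖_{L⁴}⁴`; for every `T > 0` and
`s < d_S/4` no constant `C` can satisfy `‖S_tψ‖_{L⁴L⁴} ≤ C‖ψ‖_{H^s}` along the family, and the
ratio `‖S_tψ^{(j)}‖_{L⁴L⁴}/‖ψ^{(j)}‖_{H^s}` tends to infinity. -/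
theorem stmt_16 {X : Type*} [MeasurableSpace X] (μ : Measure X)
    (dS : ℝ) (hdS : dS = Real.log 9 / Real.log 5)
    (S : ℝ → (X → ℂ) → (X → ℂ)) (ψ : ℕ → X → ℝ) (lam : ℕ → ℝ)
    (HsNorm : ℝ → (X → ℝ) → ℝ)
    (c c' c1 c2 : ℝ) (hc : 0 < c) (hc' : 0 < c') (hc1 : 0 < c1) (hc2 : 0 < c2)
    (hlam : ∀ j, lam j = c * 5 ^ j)
    (heig : ∀ (j : ℕ) (t : ℝ), S t (fun y => (ψ j y : ℂ)) =
      fun x => Complex.exp (-(Complex.I * t * lam j)) * (ψ j x : ℂ))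
    (hL2 : ∀ j, ∫ x, (ψ j x) ^ 2 ∂μ = 1)
    (hint4 : ∀ j, Integrable (fun x => (ψ j x) ^ 4) μ)
    (hL4 : ∀ j, c' * lam j ^ (dS / 2) ≤ ∫ x, (ψ j x) ^ 4 ∂μ)
    (hHs : ∀ (s : ℝ) (j : ℕ),
      c1 * lam j ^ (s / 2) ≤ HsNorm s (ψ j) ∧ HsNorm s (ψ j) ≤ c2 * lam j ^ (s / 2)) :
    ∀ T : ℝ, 0 < T → ∀ s : ℝ, s < dS / 4 →
      (∀ j : ℕ,
        ((∫ t in (0:ℝ)..T, ∫ x,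
            (‖S t (fun y => (ψ j y : ℂ)) x‖) ^ 4 ∂μ) ^ ((1:ℝ)/4)) ^ 4 =
          T * ∫ x, (ψ j x) ^ 4 ∂μ) ∧
      (∀ C : ℝ, ∃ j : ℕ, C * HsNorm s (ψ j) <
        (∫ t in (0:ℝ)..T, ∫ x,
            (‖S t (fun y => (ψ j y : ℂ)) x‖) ^ 4 ∂μ) ^ ((1:ℝ)/4)) ∧
      Tendsto (fun j : ℕ =>
        ((∫ t in (0:ℝ)..T, ∫ x,
            (‖S t (fun y => (ψ j y : ℂ)) x‖) ^ 4 ∂μ) ^ ((1:ℝ)/4)) /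
          HsNorm s (ψ j)) atTop atTop :=
  stmt_16_general μ dS S ψ lam HsNorm c c' c1 c2 hc hc' hc1 hc2 hlam heig hL4 hHs
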